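/- Let r, n, γ, d, c', α be real numbers with r > 0, 0 ≤ γ ≤ 1/2, n ≥ r, d > 0, c' > 0 and 1/3 ≤ α ≤ 2/3. Set p = r^{(2−γ)/3}, c = 3^{1/3}·d, and s = c'·p·(n/r)^{2/3}. If c'/d + 2·3^{1/3}·c'·r^{−(1+γ)/3} ≤ (1/3)^{2/3} + (2/3)^{2/3} − 1, then c'·p·(n/r)^{2/3} + (c·p·(α·n+s)/r − d·p·((α·n+s)/r)^{2/3}) + (c·p·((1−α)·n+s)/r − d·p·(((1−α)·n+s)/r)^{2/3}) ≤ c·p·(n/r) − d·p·(n/r)^{2/3}. -/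

import Mathlib

theorem stmt_13 (r n γ d c' α : ℝ) (hr : 0 < r) (hγ0 : 0 ≤ γ) (hγ2 : γ ≤ 1/2)
    (hn : r ≤ n) (hd : 0 < d) (hc' : 0 < c') (hα1 : 1/3 ≤ α) (hα2 : α ≤ 2/3)
    (p : ℝ) (hp : p = r ^ ((2 - γ)/3))
    (c : ℝ) (hc : c = 3 ^ (1/3 : ℝ) * d)
    (s : ℝ) (hs : s = c' * p * (n/r) ^ (2/3 : ℝ))
    (hmain : c'/d + 2 * 3 ^ (1/3 : ℝ) * c' * r ^ (-(1 + γ)/3) ≤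
      (1/3 : ℝ) ^ (2/3 : ℝ) + (2/3 : ℝ) ^ (2/3 : ℝ) - 1) :
    c' * p * (n/r) ^ (2/3 : ℝ) +
      (c * p * (α * n + s) / r - d * p * ((α * n + s) / r) ^ (2/3 : ℝ)) +
      (c * p * ((1 - α) * n + s) / r - d * p * (((1 - α) * n + s) / r) ^ (2/3 : ℝ)) ≤
    c * p * (n/r) - d * p * (n/r) ^ (2/3 : ℝ) := by
  have hn0 : 0 < n := lt_of_lt_of_le hr hn
  have ht0 : 0 < n / r := div_pos hn0 hr
  have hp0 : 0 < p := hp ▸ Real.rpow_pos_of_pos hr _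
  set T : ℝ := (n/r) ^ (2/3 : ℝ) with hT
  have hT0 : 0 < T := Real.rpow_pos_of_pos ht0 _
  have hs0 : 0 ≤ s := by rw [hs]; positivity
  have hα0 : (0:ℝ) ≤ α := by linarith
  have h1α0 : (0:ℝ) ≤ 1 - α := by linarith
  -- monotonicity bounds
  have hA : α ^ (2/3 : ℝ) * T ≤ ((α * n + s) / r) ^ (2/3 : ℝ) := by
    rw [hT, ← Real.mul_rpow hα0 ht0.le]
    apply Real.rpow_le_rpow (by positivity) _ (by norm_num)
    rw [mul_div_assoc']
    exact div_le_div_of_nonneg_right (by linarith) hr.le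
  have hB : (1 - α) ^ (2/3 : ℝ) * T ≤ (((1 - α) * n + s) / r) ^ (2/3 : ℝ) := by
    rw [hT, ← Real.mul_rpow h1α0 ht0.le]
    apply Real.rpow_le_rpow (by positivity) _ (by norm_num)
    rw [mul_div_assoc']
    exact div_le_div_of_nonneg_right (by linarith) hr.le
  -- concavity bound
  have hcon := (Real.strictConcaveOn_rpow (p := (2/3 : ℝ)) (by norm_num) (by norm_num)).concaveOn
  have ha : (0:ℝ) ≤ 2 - 3*α := by linarith
  have hb : (0:ℝ) ≤ 3*α - 1 := by linarith
  have hab : (2 - 3*α) + (3*α - 1) = 1 := by ring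
  have h1 := hcon.2 (Set.mem_Ici.2 (by norm_num : (0:ℝ) ≤ 1/3))
      (Set.mem_Ici.2 (by norm_num : (0:ℝ) ≤ 2/3)) ha hb hab
  have h2 := hcon.2 (Set.mem_Ici.2 (by norm_num : (0:ℝ) ≤ 2/3))
      (Set.mem_Ici.2 (by norm_num : (0:ℝ) ≤ 1/3)) ha hb hab
  simp only [smul_eq_mul] at h1 h2
  rw [show (2 - 3*α) * (1/3) + (3*α - 1) * (2/3) = α by ring] at h1
  rw [show (2 - 3*α) * (2/3) + (3*α - 1) * (1/3) = 1 - α by ring] at h2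
  have hC : (1/3 : ℝ) ^ (2/3 : ℝ) + (2/3 : ℝ) ^ (2/3 : ℝ) ≤
      α ^ (2/3 : ℝ) + (1 - α) ^ (2/3 : ℝ) := by nlinarith [h1, h2]
  -- p/r identity
  have hpr : p / r = r ^ (-(1 + γ)/3 : ℝ) := by
    rw [hp, show (-(1 + γ)/3 : ℝ) = (2 - γ)/3 - 1 by ring, Real.rpow_sub hr, Real.rpow_one]
  -- key inequality from hmain
  have hkey : c' * p * T + 2 * c * p * s / r + d * p * T ≤
      ((1/3 : ℝ) ^ (2/3 : ℝ) + (2/3 : ℝ) ^ (2/3 : ℝ)) * (d * p * T) := by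
    have h := mul_le_mul_of_nonneg_right hmain (by positivity : (0:ℝ) ≤ d * p * T)
    have e1 : c'/d * (d * p * T) = c' * p * T := by field_simp
    have e2 : 2 * 3 ^ (1/3 : ℝ) * c' * r ^ (-(1 + γ)/3) * (d * p * T)
        = 2 * c * p * s / r := by
      rw [← hpr, hc, hs]; field_simp
    rw [add_mul, e1, e2] at h
    linarith
  -- linear part
  have hlin : c * p * (α * n + s) / r + c * p * ((1 - α) * n + s) / r
      = c * p * (n/r) + 2 * c * p * s / r := by
    field_simp; ring
  have hdp : (0:ℝ) < d * p := mul_pos hd hp0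
  have hA' := mul_le_mul_of_nonneg_left hA hdp.le
  have hB' := mul_le_mul_of_nonneg_left hB hdp.le
  have hC' := mul_le_mul_of_nonneg_right hC (mul_pos hdp hT0).le
  linarith [hA', hB', hC', hkey, hlin]
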